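/- arXiv:2401.03449 — 8 statements merged into one kernel-verified Lean document; each statement's English description precedes it below -/
import Mathlib

section
/- Let R be a ring in which every idempotent is central (an abelian ring). Then the following conditions are equivalent: (i) no idempotent of R is a sum of two units except 0, i.e. (U(R)+U(R)) ∩ Id(R) = {0}; (ii) R is UUSC; (iii) R is UUC; (iv) R is CUC; (v) R is CUSC. -/
/-- An element `a` of a ring is *uniquely strongly clean* if there is exactly one
idempotent `e` such that `a - e` is a unit and `a * e = e * a`. -/
def IsUSCleanElem {R : Type*} [Ring R] (a : R) : Prop :=
  ∃! e : R, IsIdempotentElem e ∧ IsUnit (a - e) ∧ a * e = e * a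

/-- An element `a` of a ring is *uniquely clean* if there is exactly one
idempotent `e` such that `a - e` is a unit. -/
def IsUCleanElem {R : Type*} [Ring R] (a : R) : Prop :=
  ∃! e : R, IsIdempotentElem e ∧ IsUnit (a - e)

/-- An element `a` of a ring is *clean* if it is the sum of an idempotent and a unit. -/
def IsCleanElem {R : Type*} [Ring R] (a : R) : Prop :=
  ∃ e : R, IsIdempotentElem e ∧ IsUnit (a - e)

/-- A ring is *CUSC* if every clean element is uniquely strongly clean. -/
def IsCUSC (R : Type*) [Ring R] : Prop := ∀ a : R, IsCleanElem a → IsUSCleanElem a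

/-- A ring is *UUSC* if every unit is uniquely strongly clean. -/
def IsUUSC (R : Type*) [Ring R] : Prop := ∀ a : R, IsUnit a → IsUSCleanElem a

/-- A ring is *CUC* if every clean element is uniquely clean. -/
def IsCUC (R : Type*) [Ring R] : Prop := ∀ a : R, IsCleanElem a → IsUCleanElem a

/-- A ring is *UUC* if every unit is uniquely clean. -/
def IsUUC (R : Type*) [Ring R] : Prop := ∀ a : R, IsUnit a → IsUCleanElem a

/-- A ring is *USC* if every element is uniquely strongly clean. -/
def IsUSCRing (R : Type*) [Ring R] : Prop := ∀ a : R, IsUSCleanElem a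

/-- A ring is *uniquely clean* (UC) if every element is uniquely clean. -/
def IsUCRing (R : Type*) [Ring R] : Prop := ∀ a : R, IsUCleanElem a

/-- A ring is *clean* if every element is clean. -/
def IsCleanRing (R : Type*) [Ring R] : Prop := ∀ a : R, IsCleanElem a

/-- The Jacobson radical of a (possibly noncommutative) ring, as a two-sided ideal. -/
abbrev jacobsonRad (R : Type*) [Ring R] : TwoSidedIdeal R := TwoSidedIdeal.jacobson ⊥

/-- The quotient ring `R / J(R)` of a ring by its Jacobson radical. -/
abbrev JacQuot (R : Type*) [Ring R] := (jacobsonRad R).ringCon.Quotient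

/-- A ring is *semi-potent* if every one-sided (left or right) ideal not contained in the
Jacobson radical contains a nonzero idempotent.  Left ideals are `Ideal R`, right ideals
are `Rᵐᵒᵖ`-submodules of `R`. -/
def Semipotent (R : Type*) [Ring R] : Prop :=
  (∀ I : Ideal R, ¬ (I : Set R) ⊆ (jacobsonRad R : Set R) →
      ∃ e ∈ I, e ≠ 0 ∧ IsIdempotentElem e) ∧
  (∀ I : Submodule Rᵐᵒᵖ R, ¬ (I : Set R) ⊆ (jacobsonRad R : Set R) →
      ∃ e ∈ I, e ≠ 0 ∧ IsIdempotentElem e)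

/-- Idempotents lift modulo the Jacobson radical: for every `a` with `a - a ^ 2 ∈ J(R)`
there is an idempotent `e` with `a - e ∈ J(R)`. -/
def IdempotentsLiftJac (R : Type*) [Ring R] : Prop :=
  ∀ a : R, a - a ^ 2 ∈ jacobsonRad R → ∃ e : R, IsIdempotentElem e ∧ a - e ∈ jacobsonRad R

/-- A ring is *potent* if it is semi-potent and idempotents lift modulo the Jacobson radical. -/
def Potent (R : Type*) [Ring R] : Prop := Semipotent R ∧ IdempotentsLiftJac R

/-! A central idempotent `h` splits `R` as `hR × (1 - h)R`, so `h * u + (1 - h)` is a unit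
whenever `u` is. Given two clean decompositions `a = e + u = f + v`, the central idempotent
`h = e * (1 - f)` satisfies `h = h * (v - u)`, which exhibits `h` as a sum of two units; under (i)
this forces `e * (1 - f) = 0` and symmetrically `f * (1 - e) = 0`, i.e. `e = f`. The strong and
plain variants of uniqueness agree because idempotents are central. -/

def IsAbelianRing (R : Type*) [Ring R] : Prop :=
  ∀ e : R, IsIdempotentElem e → ∀ r : R, e * r = r * e

section

variable {R : Type*} [Ring R]

theorem IsIdempotentElem.mul_add_one_sub_mul_eq_one {h u w : R} (hh : IsIdempotentElem h)
    (hc : Commute h u) (huw : u * w = 1) : (h * u + (1 - h)) * (h * w + (1 - h)) = 1 := by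
  have hhuhw : h * u * (h * w) = h := by
    rw [hc.eq, ← mul_assoc, mul_assoc u h h, hh.eq, ← hc.eq, mul_assoc, huw, mul_one]
  have hhu : h * u * (1 - h) = 0 := by rw [hc.eq, mul_assoc, hh.mul_one_sub_self, mul_zero]
  have hhw : (1 - h) * (h * w) = 0 := by rw [← mul_assoc, hh.one_sub_mul_self, zero_mul]
  rw [add_mul, mul_add, mul_add, hhuhw, hhu, hhw, hh.one_sub.eq]
  abel

theorem IsIdempotentElem.isUnit_mul_add_one_sub {h u : R} (hh : IsIdempotentElem h)
    (hu : IsUnit u) (hc : Commute h u) : IsUnit (h * u + (1 - h)) := by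
  obtain ⟨u, rfl⟩ := hu
  exact ⟨⟨_, _, hh.mul_add_one_sub_mul_eq_one hc u.mul_inv,
    hh.mul_add_one_sub_mul_eq_one hc.units_inv_right u.inv_mul⟩, rfl⟩

theorem IsIdempotentElem.exists_isUnit_add_eq_mul_sub {h u v : R} (hh : IsIdempotentElem h)
    (hu : IsUnit u) (hv : IsUnit v) (hcu : Commute h u) (hcv : Commute h v) :
    ∃ x y : R, IsUnit x ∧ IsUnit y ∧ h * (u - v) = x + y :=
  ⟨_, _, hh.isUnit_mul_add_one_sub hu hcu, (hh.isUnit_mul_add_one_sub hv hcv).neg, by noncomm_ring⟩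

theorem IsAbelianRing.exists_isUnit_add_eq_mul_one_sub (habelian : IsAbelianRing R) {a e f : R}
    (he : IsIdempotentElem e) (hf : IsIdempotentElem f) (hae : IsUnit (a - e))
    (haf : IsUnit (a - f)) : ∃ x y : R, IsUnit x ∧ IsUnit y ∧ e * (1 - f) = x + y := by
  set h := e * (1 - f)
  have hh : IsIdempotentElem h := he.mul_of_commute (habelian e he _) hf.one_sub
  have hhe : h * e = h := by rw [habelian h hh e, ← mul_assoc, he.eq]
  have hhf : h * f = 0 := by rw [mul_assoc, hf.one_sub_mul_self, mul_zero]
  have hfix : h * ((a - f) - (a - e)) = h := by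
    rw [sub_sub_sub_cancel_left, mul_sub, hhe, hhf, sub_zero]
  rw [← hfix]
  exact hh.exists_isUnit_add_eq_mul_sub haf hae (habelian h hh _) (habelian h hh _)

theorem IsAbelianRing.eq_of_isUnit_sub (habelian : IsAbelianRing R)
    (hidem : ∀ e : R, IsIdempotentElem e → (∃ u v : R, IsUnit u ∧ IsUnit v ∧ e = u + v) → e = 0)
    {a e f : R} (he : IsIdempotentElem e) (hf : IsIdempotentElem f) (hae : IsUnit (a - e))
    (haf : IsUnit (a - f)) : e = f := by
  have hef : e * (1 - f) = 0 := hidem _ (he.mul_of_commute (habelian e he _) hf.one_sub)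
    (habelian.exists_isUnit_add_eq_mul_one_sub he hf hae haf)
  have hfe : f * (1 - e) = 0 := hidem _ (hf.mul_of_commute (habelian f hf _) he.one_sub)
    (habelian.exists_isUnit_add_eq_mul_one_sub hf he haf hae)
  rw [mul_sub, mul_one, sub_eq_zero] at hef hfe
  rw [hef, habelian e he f, ← hfe]

theorem IsAbelianRing.isUSCleanElem_iff (habelian : IsAbelianRing R) (a : R) :
    IsUSCleanElem a ↔ IsUCleanElem a :=
  existsUnique_congr fun e => ⟨fun ⟨he, hae, _⟩ => ⟨he, hae⟩,
    fun ⟨he, hae⟩ => ⟨he, hae, (habelian e he a).symm⟩⟩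

theorem IsUnit.isCleanElem {a : R} (ha : IsUnit a) : IsCleanElem a :=
  ⟨0, .zero, by rwa [sub_zero]⟩

end

/-- Proposition 2.1: for an abelian ring (all idempotents central), the conditions
(i) `(U(R)+U(R)) ∩ Id(R) = {0}`, (ii) UUSC, (iii) UUC, (iv) CUC, (v) CUSC are equivalent. -/
theorem stmt_0 (R : Type*) [Ring R]
    (habelian : ∀ e : R, IsIdempotentElem e → ∀ r : R, e * r = r * e) :
    List.TFAE
      [(∀ e : R, IsIdempotentElem e → (∃ u v : R, IsUnit u ∧ IsUnit v ∧ e = u + v) → e = 0),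
       IsUUSC R,
       IsUUC R,
       IsCUC R,
       IsCUSC R] := by
  have habelian : IsAbelianRing R := habelian
  tfae_have 1 → 4 := fun hidem a ⟨e, he, hae⟩ =>
    ⟨e, ⟨he, hae⟩, fun f ⟨hf, haf⟩ => habelian.eq_of_isUnit_sub hidem hf he haf hae⟩
  tfae_have 4 → 3 := fun h a ha => h a ha.isCleanElem
  tfae_have 3 → 1 := by
    rintro h e he ⟨u, v, hu, hv, rfl⟩
    have hu_sub : IsUnit (u - (u + v)) := by rw [sub_add_cancel_left]; exact hv.neg
    exact (h u hu).unique ⟨he, hu_sub⟩ ⟨.zero, by rwa [sub_zero]⟩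
  tfae_have 2 ↔ 3 := forall₂_congr fun a _ => habelian.isUSCleanElem_iff a
  tfae_have 4 ↔ 5 := forall₂_congr fun a _ => (habelian.isUSCleanElem_iff a).symm
  tfae_finish
end

section
/- Let R be a ring and I an ideal of R with I ⊆ J(R), where J(R) is the Jacobson radical. If the quotient ring R/I is UUSC, then R is UUSC. -/
/-!
A unit `a` always has the strongly clean decomposition `a = 0 + a`, so `a` is uniquely strongly
clean exactly when every idempotent `e` commuting with `a` and with `a - e` a unit vanishes.
Such an `e` maps to an idempotent of the same kind in `R / I`, hence to `0`; so `e ∈ I ⊆ J(R)`,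
and the only idempotent in the Jacobson radical is `0`.
-/

theorem IsIdempotentElem.eq_zero_of_mem_jacobsonRad {R : Type*} [Ring R] {e : R}
    (he : IsIdempotentElem e) (hJ : e ∈ jacobsonRad R) : e = 0 := by
  obtain ⟨z, hz⟩ := TwoSidedIdeal.mem_jacobson_iff.mp hJ (-1)
  rw [TwoSidedIdeal.mem_bot] at hz
  have hz' : z * (1 - e) = 1 := by rw [← sub_eq_zero, ← hz]; noncomm_ring
  calc e = z * (1 - e) * e := by rw [hz', one_mul]
    _ = 0 := by rw [mul_assoc, sub_mul, one_mul, he.eq, sub_self, mul_zero]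

theorem isUSCleanElem_iff_of_isUnit {R : Type*} [Ring R] {a : R} (ha : IsUnit a) :
    IsUSCleanElem a ↔
      ∀ e : R, IsIdempotentElem e → IsUnit (a - e) → a * e = e * a → e = 0 := by
  refine ⟨fun ⟨_, _, huniq⟩ e he hu hc => ?_, fun h => ?_⟩
  · rw [huniq e ⟨he, hu, hc⟩, huniq 0 ⟨.zero, by simpa using ha, by simp⟩]
  · exact ⟨0, ⟨.zero, by simpa using ha, by simp⟩, fun e ⟨he, hu, hc⟩ => h e he hu hc⟩

theorem IsUUSC.of_ringHom {R S : Type*} [Ring R] [Ring S] (f : R →+* S)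
    (hker : ∀ x, f x = 0 → x ∈ jacobsonRad R) (hS : IsUUSC S) : IsUUSC R := by
  intro a ha
  rw [isUSCleanElem_iff_of_isUnit ha]
  intro e he hu hc
  have hfe : f e = 0 :=
    (isUSCleanElem_iff_of_isUnit (ha.map f)).mp (hS _ (ha.map f)) (f e) (he.map f)
      (by simpa using hu.map f) (by rw [← map_mul, ← map_mul, hc])
  exact he.eq_zero_of_mem_jacobsonRad (hker e hfe)

/-- Lemma 2.8(i): if `I ⊆ J(R)` is a two-sided ideal and `R/I` is UUSC, then `R` is UUSC. -/
theorem stmt_3 {R : Type*} [Ring R] (I : TwoSidedIdeal R)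
    (hIJ : (I : Set R) ⊆ (jacobsonRad R : Set R))
    (hquot : IsUUSC I.ringCon.Quotient) : IsUUSC R := by
  refine IsUUSC.of_ringHom (RingCon.mk' I.ringCon) (fun x hx => hIJ ?_) hquot
  rw [← map_zero (RingCon.mk' I.ringCon)] at hx
  simpa [TwoSidedIdeal.rel_iff] using (RingCon.eq _).mp hx
end

section
/- Suppose R = S + I where S is a subring of R containing 1_R, I is a (two-sided) ideal of R, and S ∩ I = {0}. If S is UUSC and the only idempotent of I that is a sum of two units of R is 0 (i.e. (U(R)+U(R)) ∩ Id(I) = {0}), then R is UUSC. -/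
/-! Every unit `a` is strongly clean with idempotent `0`. If `e` is another such idempotent,
its image under `R → R / I ≅ S` is one for the unit image of `a` in `S`, so by uniqueness in `S`
it vanishes, i.e. `e ∈ I`. Then `e = a + (e - a)` is an idempotent of `I` that is a sum of two
units, hence `e = 0`. -/

theorem IsUUSC.eq_zero_of_isUnit_sub {T : Type*} [Ring T] (hT : IsUUSC T) {a e : T}
    (ha : IsUnit a) (he : IsIdempotentElem e) (hae : IsUnit (a - e)) (hcomm : a * e = e * a) :
    e = 0 :=
  (hT a ha).unique ⟨he, hae, hcomm⟩ ⟨.zero, by simpa using ha, by simp⟩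

theorem IsUUSC.map_eq_zero_of_isUnit_sub {R T : Type*} [Ring R] [Ring T] (hT : IsUUSC T)
    (φ : R →+* T) {a e : R} (ha : IsUnit a) (he : IsIdempotentElem e) (hae : IsUnit (a - e))
    (hcomm : a * e = e * a) : φ e = 0 :=
  hT.eq_zero_of_isUnit_sub (ha.map φ) (he.map φ) (by simpa using hae.map φ)
    (by simp only [← map_mul, hcomm])

noncomputable def Subring.equivQuotientOfIsCompl {R : Type*} [Ring R] (S : Subring R)
    (I : TwoSidedIdeal R) (hsum : ∀ r : R, ∃ s ∈ S, ∃ x ∈ I, r = s + x)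
    (hint : ∀ x : R, x ∈ S → x ∈ I → x = 0) : S ≃+* I.ringCon.Quotient :=
  RingEquiv.ofBijective (I.ringCon.mk'.comp S.subtype) <| by
    refine ⟨(injective_iff_map_eq_zero _).mpr fun s hs ↦ ?_, fun q ↦ ?_⟩
    · have hsI : (s : R) ∈ I := by
        rwa [← TwoSidedIdeal.ker_ringCon_mk' I, TwoSidedIdeal.mem_ker]
      exact Subtype.ext (hint s s.2 hsI)
    · obtain ⟨r, rfl⟩ := I.ringCon.mk'_surjective q
      obtain ⟨s, hs, x, hx, rfl⟩ := hsum r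
      refine ⟨⟨s, hs⟩, (RingCon.eq _).mpr ?_⟩
      rw [TwoSidedIdeal.rel_iff]
      simpa using I.neg_mem hx

/-- Proposition 2.13: if `R = S + I` with `S` a (unital) subring, `I` a two-sided ideal,
`S ∩ I = {0}`, `S` UUSC and `(U(R)+U(R)) ∩ Id(I) = {0}`, then `R` is UUSC. -/
theorem stmt_5 {R : Type*} [Ring R] (S : Subring R) (I : TwoSidedIdeal R)
    (hsum : ∀ r : R, ∃ s ∈ S, ∃ x ∈ I, r = s + x)
    (hint : ∀ x : R, x ∈ S → x ∈ I → x = 0)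
    (hS : IsUUSC S)
    (hidem : ∀ e : R, e ∈ I → IsIdempotentElem e →
      (∃ u v : R, IsUnit u ∧ IsUnit v ∧ e = u + v) → e = 0) :
    IsUUSC R := by
  intro a ha
  refine ⟨0, ⟨.zero, by simpa using ha, by simp⟩, ?_⟩
  rintro e ⟨he, hae, hcomm⟩
  let ψ := S.equivQuotientOfIsCompl I hsum hint
  have heI : e ∈ I := by
    have h := hS.map_eq_zero_of_isUnit_sub (ψ.symm.toRingHom.comp I.ringCon.mk') ha he hae hcomm
    rw [← TwoSidedIdeal.ker_ringCon_mk' I, TwoSidedIdeal.mem_ker]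
    simpa using congrArg ψ h
  exact hidem e heI he ⟨a, e - a, ha, by simpa using hae.neg, by abel⟩
end

section
/- For a ring A, the formal power series ring A[[x]] is UUSC if and only if A is UUSC. -/
/-!
In a UUSC ring the unique strongly clean decomposition of a unit `a` is `a = 0 + a`, so a ring is
UUSC exactly when every idempotent `e` commuting with a unit `a` and with `a - e` a unit vanishes.
This property descends along the embedding `C : A → A⟦X⟧`, and it also descends along
`constantCoeff : A⟦X⟧ → A`, because an idempotent `E` with constant coefficient `0` has
`1 - E` invertible and `E * (1 - E) = 0`.
-/

section UUSC

variable {R S : Type*} [Ring R] [Ring S]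

theorem isUUSC_iff_forall_idempotent_eq_zero :
    IsUUSC R ↔ ∀ a e : R, IsUnit a → IsIdempotentElem e → IsUnit (a - e) → a * e = e * a →
      e = 0 := by
  constructor
  · intro h a e ha he hae hcomm
    obtain ⟨e₀, -, huniq⟩ := h a ha
    exact (huniq e ⟨he, hae, hcomm⟩).trans
      (huniq 0 ⟨.zero, by simpa using ha, by simp⟩).symm
  · intro h a ha
    exact ⟨0, ⟨.zero, by simpa using ha, by simp⟩,
      fun e ⟨he, hae, hcomm⟩ => h a e ha he hae hcomm⟩

theorem IsIdempotentElem.eq_zero_of_isUnit_one_sub {e : R} (he : IsIdempotentElem e)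
    (hu : IsUnit (1 - e)) : e = 0 :=
  hu.mul_left_eq_zero.mp (by rw [mul_sub, mul_one, he.eq, sub_self])

theorem IsIdempotentElem.eq_zero_of_map_eq_zero (f : R →+* S) [IsLocalHom f] {e : R}
    (he : IsIdempotentElem e) (hfe : f e = 0) : e = 0 :=
  he.eq_zero_of_isUnit_one_sub <| IsUnit.of_map f _ <| by simp [hfe]

theorem IsUUSC.of_forall_map_eq_zero (f : R →+* S) (hS : IsUUSC S)
    (hf : ∀ e : R, IsIdempotentElem e → f e = 0 → e = 0) : IsUUSC R := by
  rw [isUUSC_iff_forall_idempotent_eq_zero] at hS ⊢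
  intro a e ha he hae hcomm
  refine hf e he (hS (f a) (f e) (ha.map f) (he.map f) ?_ ?_)
  · simpa using hae.map f
  · rw [← map_mul, hcomm, map_mul]

theorem IsUUSC.of_injective (f : R →+* S) (hf : Function.Injective f) (hS : IsUUSC S) :
    IsUUSC R :=
  hS.of_forall_map_eq_zero f fun _ _ h => hf (h.trans (map_zero f).symm)

theorem IsUUSC.of_isLocalHom (f : R →+* S) [IsLocalHom f] (hS : IsUUSC S) : IsUUSC R :=
  hS.of_forall_map_eq_zero f fun _ he => he.eq_zero_of_map_eq_zero f

end UUSC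

instance PowerSeries.isLocalHom_constantCoeff (A : Type*) [Ring A] :
    IsLocalHom (PowerSeries.constantCoeff (R := A)) :=
  ⟨fun _ h => PowerSeries.isUnit_iff_constantCoeff.mpr h⟩

/-- Corollary 2.14(i): `A[[x]]` is UUSC iff `A` is UUSC. -/
theorem stmt_6 (A : Type*) [Ring A] : IsUUSC (PowerSeries A) ↔ IsUUSC A :=
  ⟨IsUUSC.of_injective PowerSeries.C PowerSeries.C_injective,
    IsUUSC.of_isLocalHom PowerSeries.constantCoeff⟩
end

section
/- Let A be a ring and V an (A,A)-bimodule. The trivial extension T(A,V) = {(a,x) : a ∈ A, x ∈ V}, with componentwise addition and multiplication (a,x)(b,y) = (ab, ay + xb), is UUSC if and only if A is UUSC. -/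
/-! Since `0` is a strongly clean idempotent for every unit, a ring is UUSC exactly when no
nonzero idempotent `e` commuting with a unit `u` has `u - e` a unit. This condition passes
back along any ring homomorphism that kills no nonzero idempotent; both `inl : A → T(A, V)`
(injective) and `fst : T(A, V) → A` (whose kernel `V` squares to zero) are such maps. -/

theorem isUUSC_iff_forall_eq_zero {R : Type*} [Ring R] :
    IsUUSC R ↔ ∀ a : R, IsUnit a → ∀ e : R, IsIdempotentElem e → IsUnit (a - e) →
      a * e = e * a → e = 0 := by
  have zero_witness {a : R} (ha : IsUnit a) : IsIdempotentElem (0 : R) ∧ IsUnit (a - 0) ∧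
      a * 0 = 0 * a := ⟨.zero, by rwa [sub_zero], by rw [mul_zero, zero_mul]⟩
  refine ⟨fun h a ha e he hu hc => (h a ha).unique ⟨he, hu, hc⟩ (zero_witness ha),
    fun h a ha => ⟨0, zero_witness ha, fun e ⟨he, hu, hc⟩ => h a ha e he hu hc⟩⟩

theorem IsUUSC.of_ringHom_s7 {R S : Type*} [Ring R] [Ring S] (f : R →+* S)
    (hf : ∀ e : R, IsIdempotentElem e → f e = 0 → e = 0) (h : IsUUSC S) : IsUUSC R := by
  rw [isUUSC_iff_forall_eq_zero] at h ⊢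
  intro a ha e he hu hc
  refine hf e he (h (f a) (ha.map f) (f e) (he.map f) ?_ ?_)
  · simpa only [map_sub] using hu.map f
  · simp only [← map_mul, hc]

namespace TrivSqZeroExt

theorem eq_zero_of_isIdempotentElem_of_fst_eq_zero {R M : Type*} [Semiring R]
    [AddCommMonoid M] [Module R M] [Module Rᵐᵒᵖ M] {x : TrivSqZeroExt R M}
    (hx : IsIdempotentElem x) (h : x.fst = 0) : x = 0 := by
  have hx_inr : x = inr x.snd := by
    conv_lhs => rw [← inl_fst_add_inr_snd_eq x, h, inl_zero, zero_add]
  calc x = inr x.snd * inr x.snd := by rw [← hx_inr, hx.eq]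
    _ = 0 := inr_mul_inr R _ _

end TrivSqZeroExt

/-- Corollary 2.14(iv): the trivial extension `T(A, V)` is UUSC iff `A` is UUSC. -/
theorem stmt_7 (A V : Type*) [Ring A] [AddCommGroup V] [Module A V] [Module Aᵐᵒᵖ V]
    [SMulCommClass A Aᵐᵒᵖ V] :
    IsUUSC (TrivSqZeroExt A V) ↔ IsUUSC A :=
  ⟨IsUUSC.of_ringHom_s7 (TrivSqZeroExt.inlHom A V) fun _ _ he =>
      TrivSqZeroExt.inl_injective (he.trans (TrivSqZeroExt.inl_zero V).symm),
    IsUUSC.of_ringHom_s7 (TrivSqZeroExt.fstHom ℕ A V).toRingHom fun _ he h =>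
      TrivSqZeroExt.eq_zero_of_isIdempotentElem_of_fst_eq_zero he h⟩
end

section
/- Every potent UUSC ring is left quasi-duo and right quasi-duo, i.e., every maximal left ideal and every maximal right ideal is a two-sided ideal. -/
local notation "π" => Ideal.Quotient.mk (Ring.jacobson _)

section Jacobson

variable {R : Type*} [Ring R]

theorem mem_jacobsonRad_iff {x : R} : x ∈ jacobsonRad R ↔ x ∈ Ring.jacobson R := by
  rw [← TwoSidedIdeal.mem_asIdeal, TwoSidedIdeal.asIdeal_jacobson, ← Ideal.jacobson_bot]
  congr!

theorem exists_mul_one_add_eq_one {x : R} (hx : x ∈ Ring.jacobson R) :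
    ∃ z, z * (1 + x) = 1 := by
  rw [← Ideal.jacobson_bot] at hx
  obtain ⟨z, hz⟩ := Ideal.mem_jacobson_iff.1 hx 1
  exact ⟨z, by rw [Ideal.mem_bot, sub_eq_zero, mul_one] at hz; rw [mul_add, mul_one, add_comm, hz]⟩

theorem isUnit_one_add_of_mem_jacobson {x : R} (hx : x ∈ Ring.jacobson R) : IsUnit (1 + x) := by
  obtain ⟨z, hz⟩ := exists_mul_one_add_eq_one hx
  have hzx : z = 1 + -(z * x) := by
    rw [← hz]; noncomm_ring
  obtain ⟨z', hz'⟩ := exists_mul_one_add_eq_one (neg_mem (Ideal.mul_mem_left _ z hx))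
  rw [← hzx] at hz'
  have : z' = 1 + x := left_inv_eq_right_inv hz' hz
  exact isUnit_iff_exists.2 ⟨z, this ▸ hz', hz⟩

theorem isUnit_of_mk_jacobson_eq_one {x : R} (hx : π x = 1) : IsUnit x := by
  simpa using isUnit_one_add_of_mem_jacobson (Ideal.Quotient.eq.1 (hx.trans (map_one _).symm))

instance isLocalHom_mk_jacobson : IsLocalHom (Ideal.Quotient.mk (Ring.jacobson R)) := by
  refine ⟨fun u hu => ?_⟩
  obtain ⟨v, hv⟩ := Ideal.Quotient.mk_surjective (↑hu.unit⁻¹ : R ⧸ Ring.jacobson R)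
  obtain ⟨s, hs⟩ := isUnit_of_mk_jacobson_eq_one (x := u * v) (by simp [hv])
  obtain ⟨t, ht⟩ := isUnit_of_mk_jacobson_eq_one (x := v * u) (by simp [hv])
  refine isUnit_iff_exists_and_exists.2 ⟨⟨v * ↑s⁻¹, ?_⟩, ⟨↑t⁻¹ * v, ?_⟩⟩
  · rw [← mul_assoc, ← hs, Units.mul_inv]
  · rw [mul_assoc, ← ht, Units.inv_mul]

theorem IsIdempotentElem.eq_zero_of_mem_jacobson {e : R} (he : IsIdempotentElem e)
    (hJ : e ∈ Ring.jacobson R) : e = 0 := by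
  have hu : IsUnit (1 - e) := by
    simpa [sub_eq_add_neg] using isUnit_one_add_of_mem_jacobson (neg_mem hJ)
  rw [← hu.mul_left_eq_zero, mul_sub, mul_one, he.eq, sub_self]

theorem mem_of_isCoatom_of_mem_jacobson {I : Submodule Rᵐᵒᵖ R} (hI : IsCoatom I) {x : R}
    (hx : x ∈ Ring.jacobson R) : x ∈ I := by
  by_contra hxI
  have htop : I ⊔ Submodule.span Rᵐᵒᵖ {x} = ⊤ :=
    hI.2 _ (left_lt_sup.2 fun h => hxI (h (Submodule.mem_span_singleton_self x)))
  obtain ⟨y, hy, z, hz, hyz⟩ := Submodule.mem_sup.1 (htop ▸ Submodule.mem_top (x := (1 : R)))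
  obtain ⟨r, rfl⟩ := Submodule.mem_span_singleton.1 hz
  have hunit : IsUnit y := by
    rw [eq_sub_of_add_eq hyz, sub_eq_add_neg]
    exact isUnit_one_add_of_mem_jacobson (neg_mem (Ideal.mul_mem_right _ _ hx))
  refine hI.1 (Submodule.eq_top_iff'.2 fun s => ?_)
  simpa [← mul_assoc] using I.smul_mem (MulOpposite.op (↑hunit.unit⁻¹ * s)) hy

end Jacobson

section Corner

variable {Q : Type*} [Ring Q]

def IsCornerUnit (e x : Q) : Prop := e * x = x ∧ x * e = x ∧ ∃ y z, x * y = e ∧ z * x = e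

theorem IsCornerUnit.isUnit_add_one_sub {e x : Q} (he : IsIdempotentElem e)
    (hx : IsCornerUnit e x) : IsUnit (x + (1 - e)) := by
  obtain ⟨hex, hxe, y, z, hxy, hzx⟩ := hx
  refine isUnit_iff_exists_and_exists.2 ⟨⟨e * y * e + (1 - e), ?_⟩, ⟨e * z * e + (1 - e), ?_⟩⟩
  · calc (x + (1 - e)) * (e * y * e + (1 - e))
        = (x * e) * y * e + (x - x * e) + (e * y * e - e * e * y * e) + (1 - e - e + e * e) := by
          noncomm_ring
      _ = 1 := by rw [hxe, he.eq, hxy, he.eq, sub_self]; abel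
  · calc (e * z * e + (1 - e)) * (x + (1 - e))
        = e * z * (e * x) + (e * z * e - e * z * e * e) + (x - e * x) + (1 - e - e + e * e) := by
          noncomm_ring
      _ = 1 := by rw [hex, mul_assoc (e * z) e e, he.eq, mul_assoc, hzx, he.eq, sub_self]; abel

theorem isCornerUnit_mul_of_forall_commute {e x y z : Q} (he : IsIdempotentElem e)
    (hcen : ∀ t, Commute e t) (hxy : x * y * e = e) (hzx : z * x * e = e) :
    IsCornerUnit e (x * e) := by
  have hmul : ∀ a b : Q, (a * e) * (b * e) = a * b * e := fun a b => by
    rw [mul_assoc, ← mul_assoc e, (hcen b).eq, mul_assoc, he.eq, mul_assoc]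
  refine ⟨by rw [← mul_assoc, (hcen x).eq, mul_assoc, he.eq], by rw [mul_assoc, he.eq],
    y * e, z * e, ?_, ?_⟩
  · rw [hmul, hxy]
  · rw [hmul, hzx]

theorem exists_isCornerUnit_of_mul_self_eq_zero {n b : Q} (hn : n * n = 0)
    (hb : b * n * b = b) :
    ∃ g v : Q, IsIdempotentElem g ∧ IsCornerUnit g v ∧ IsCornerUnit g (v - g) ∧
      g * (n * b) = n * b := by
  have hn' : ∀ t, n * (n * t) = 0 := fun t => by rw [← mul_assoc, hn, zero_mul]
  have hb₀ : b * (n * b) = b := by rw [← mul_assoc, hb]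
  have hb' : ∀ t, b * (n * (b * t)) = b * t := fun t => by rw [← mul_assoc, ← mul_assoc, hb]
  -- `nb`, `nbn`, `b - nb·b`, `bn - nb·bn` are the matrix units `e₁₁, e₁₂, e₂₁, e₂₂` of a corner,
  -- and `v = [[1, 1], [1, 0]]` there satisfies `v (v - 1) = 1`.
  set g := n * b + (b * n - n * b * (b * n))
  set v := n * b + n * b * n + (b - n * b * b)
  obtain ⟨hg, hgv, hvg, hvw, hwv, hgnb⟩ : IsIdempotentElem g ∧ g * v = v ∧ v * g = v ∧
      v * (v - g) = g ∧ (v - g) * v = g ∧ g * (n * b) = n * b := by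
    refine ⟨?_, ?_, ?_, ?_, ?_, ?_⟩ <;>
    simp only [g, v, IsIdempotentElem, mul_add, add_mul, mul_sub, sub_mul, mul_assoc, hb₀, hb',
      hn', mul_zero, sub_zero, add_zero] <;> abel
  refine ⟨g, v, hg, ⟨hgv, hvg, v - g, v - g, hvw, hwv⟩,
    ⟨?_, ?_, v, v, hwv, hvw⟩, hgnb⟩
  · rw [mul_sub, hgv, hg.eq]
  · rw [sub_mul, hvg, hg.eq]

end Corner

section PotentUUSC

variable {R : Type*} [Ring R]

theorem IsUUSC.eq_zero_of_isUnit_sub_s10 (h : IsUUSC R) {u e : R} (hu : IsUnit u)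
    (he : IsIdempotentElem e) (hcomm : u * e = e * u) (hue : IsUnit (u - e)) : e = 0 := by
  obtain ⟨e', -, huniq⟩ := h u hu
  rw [huniq e ⟨he, hue, hcomm⟩, ← huniq 0 ⟨.zero, by simpa using hu, by simp⟩]

theorem IsUUSC.eq_zero_of_isCornerUnit (h : IsUUSC R) {g : R} (hg : IsIdempotentElem g)
    {x : R ⧸ Ring.jacobson R} (hx : IsCornerUnit (π g) x) (hx' : IsCornerUnit (π g) (x - π g)) :
    g = 0 := by
  obtain ⟨v, rfl⟩ := Ideal.Quotient.mk_surjective x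
  have hπ : π (g * v * g) = π v := by rw [map_mul, map_mul, hx.1, hx.2.1]
  refine h.eq_zero_of_isUnit_sub_s10 (u := g * v * g + (1 - g)) ?_ hg ?_ ?_
  · refine isUnit_of_map_unit (π) _ ?_
    simpa [hπ] using hx.isUnit_add_one_sub (hg.map _)
  · rw [add_mul, mul_add, mul_assoc, hg.eq, sub_mul, mul_sub, hg.eq, one_mul, mul_one, sub_self,
      ← mul_assoc, ← mul_assoc, hg.eq]
  · refine isUnit_of_map_unit (π) _ ?_
    convert hx'.isUnit_add_one_sub (hg.map _) using 1
    rw [map_sub, map_add, hπ, map_sub, map_one]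
    abel

theorem Semipotent.exists_ne_zero_mul_mul_eq (hsp : Semipotent R) {c : R}
    (hc : c ∉ Ring.jacobson R) : ∃ b ≠ 0, b * c * b = b := by
  obtain ⟨g, hgc, hg0, hg⟩ := hsp.1 (Ideal.span {c}) fun hsub =>
    hc (mem_jacobsonRad_iff.1 (hsub (Ideal.subset_span rfl)))
  obtain ⟨t, rfl⟩ := Ideal.mem_span_singleton'.1 hgc
  refine ⟨t * c * t, fun h0 => hg0 ?_, ?_⟩
  · rw [← hg.eq, ← mul_assoc, h0, zero_mul]
  · calc t * c * t * c * (t * c * t) = t * c * (t * c) * (t * c) * t := by noncomm_ring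
      _ = t * c * t := by rw [hg.eq, hg.eq]

theorem mul_notMem_jacobson_of_mul_mul_eq {b c : R} (hb : b ≠ 0) (hbcb : b * c * b = b) :
    c * b ∉ Ring.jacobson R := fun hJ => hb <| by
  have hcb : IsIdempotentElem (c * b) := by
    rw [IsIdempotentElem, mul_assoc, ← mul_assoc b, hbcb]
  rw [← hbcb, mul_assoc, hcb.eq_zero_of_mem_jacobson hJ, mul_zero]

theorem IdempotentsLiftJac.exists_isIdempotentElem_mk_eq (hlift : IdempotentsLiftJac R)
    {G : R ⧸ Ring.jacobson R} (hG : IsIdempotentElem G) :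
    ∃ g, IsIdempotentElem g ∧ π g = G := by
  obtain ⟨a, rfl⟩ := Ideal.Quotient.mk_surjective G
  obtain ⟨g, hg, hag⟩ := hlift a <| mem_jacobsonRad_iff.2 <| by
    rw [← Ideal.Quotient.eq_zero_iff_mem, map_sub, map_pow, sq, hG.eq, sub_self]
  exact ⟨g, hg, (Ideal.Quotient.eq.2 (mem_jacobsonRad_iff.1 hag)).symm⟩

theorem mem_jacobson_of_mul_self_mem (hpot : Potent R) (h : IsUUSC R) {n : R}
    (hn : n * n ∈ Ring.jacobson R) : n ∈ Ring.jacobson R := by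
  by_contra hnJ
  obtain ⟨b, hb0, hbnb⟩ := hpot.1.exists_ne_zero_mul_mul_eq hnJ
  obtain ⟨G, V, hG, hV, hV', hGnb⟩ :=
    exists_isCornerUnit_of_mul_self_eq_zero (n := π n) (b := π b)
      (by rw [← map_mul, Ideal.Quotient.eq_zero_iff_mem]; exact hn)
      (by rw [← map_mul, ← map_mul, hbnb])
  obtain ⟨g, hg, rfl⟩ := hpot.2.exists_isIdempotentElem_mk_eq hG
  have hg0 : g = 0 := h.eq_zero_of_isCornerUnit hg hV hV'
  refine mul_notMem_jacobson_of_mul_mul_eq hb0 hbnb ?_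
  rw [← Ideal.Quotient.eq_zero_iff_mem, map_mul, ← hGnb, hg0, map_zero, zero_mul]

theorem mul_sub_mul_mem_jacobson_of_isIdempotentElem (hpot : Potent R) (h : IsUUSC R) {e : R}
    (he : IsIdempotentElem e) (r : R) : e * r - r * e ∈ Ring.jacobson R := by
  have hsq : ∀ x : R, x * x = 0 → x ∈ Ring.jacobson R := fun x hx =>
    mem_jacobson_of_mul_self_mem hpot h (hx ▸ zero_mem _)
  have h₁ : e * r * (1 - e) ∈ Ring.jacobson R := hsq _ <| by
    rw [show e * r * (1 - e) * (e * r * (1 - e)) = e * r * ((1 - e) * e) * r * (1 - e) by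
      noncomm_ring, sub_mul, one_mul, he.eq, sub_self, mul_zero, zero_mul, zero_mul]
  have h₂ : (1 - e) * r * e ∈ Ring.jacobson R := hsq _ <| by
    rw [show (1 - e) * r * e * ((1 - e) * r * e) = (1 - e) * r * (e * (1 - e)) * r * e by
      noncomm_ring, mul_sub, mul_one, he.eq, sub_self, mul_zero, zero_mul, zero_mul]
  convert sub_mem h₁ h₂ using 1
  noncomm_ring

theorem commute_mk_of_isIdempotentElem (hpot : Potent R) (h : IsUUSC R) {e : R}
    (he : IsIdempotentElem e) (t : R ⧸ Ring.jacobson R) : Commute (π e) t := by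
  obtain ⟨r, rfl⟩ := Ideal.Quotient.mk_surjective t
  rw [Commute, SemiconjBy, ← map_mul, ← map_mul, Ideal.Quotient.eq]
  exact mul_sub_mul_mem_jacobson_of_isIdempotentElem hpot h he r

theorem sub_mul_self_mem_jacobson (hpot : Potent R) (h : IsUUSC R) (a : R) :
    a - a * a ∈ Ring.jacobson R := by
  set c := a - a * a with hc
  by_contra hcJ
  obtain ⟨b, hb0, hbcb⟩ := hpot.1.exists_ne_zero_mul_mul_eq hcJ
  have he : IsIdempotentElem (c * b) := by
    rw [IsIdempotentElem, mul_assoc, ← mul_assoc b, hbcb]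
  have hf : IsIdempotentElem (b * c) := by
    rw [IsIdempotentElem, ← mul_assoc, hbcb]
  have hE := commute_mk_of_isIdempotentElem hpot h he
  have hF := commute_mk_of_isIdempotentElem hpot h hf
  have hC : π c = π a - π a * π a := by simp [hc]
  have hCB : π c * π b * π (c * b) = π (c * b) := by rw [← map_mul, (he.map _).eq]
  have hBC : π b * π c * π (c * b) = π (c * b) := by
    calc π b * π c * π (c * b) = π (b * c) * π c * π b := by simp only [map_mul, mul_assoc]
      _ = π c * π (b * c) * π b := by rw [(hF _).eq]
      _ = π (c * b) := by rw [← map_mul, ← map_mul, mul_assoc c, hbcb]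
  have hA : IsCornerUnit (π (c * b)) (π a * π (c * b)) :=
    isCornerUnit_mul_of_forall_commute (he.map _) hE (y := (1 - π a) * π b)
      (z := π b * (1 - π a)) (.trans (by rw [hC]; noncomm_ring) hCB)
      (.trans (by rw [hC]; noncomm_ring) hBC)
  have hA' : IsCornerUnit (π (c * b)) (π a * π (c * b) - π (c * b)) := by
    rw [← sub_one_mul]
    exact isCornerUnit_mul_of_forall_commute (he.map _) hE (y := -(π a * π b))
      (z := -(π b * π a)) (.trans (by rw [hC]; noncomm_ring) hCB)
      (.trans (by rw [hC]; noncomm_ring) hBC)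
  exact mul_notMem_jacobson_of_mul_mul_eq hb0 hbcb
    ((h.eq_zero_of_isCornerUnit he hA hA').symm ▸ zero_mem _)

theorem mul_sub_mul_mem_jacobson (hpot : Potent R) (h : IsUUSC R) (x y : R) :
    x * y - y * x ∈ Ring.jacobson R := by
  let _ : BooleanRing (R ⧸ Ring.jacobson R) :=
    { isIdempotentElem := fun t => by
        obtain ⟨a, rfl⟩ := Ideal.Quotient.mk_surjective t
        rw [IsIdempotentElem, ← map_mul, ← sub_eq_zero, ← map_sub, Ideal.Quotient.eq_zero_iff_mem,
          ← neg_mem_iff, neg_sub]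
        exact sub_mul_self_mem_jacobson hpot h a }
  rw [← Ideal.Quotient.eq, map_mul, map_mul]
  exact mul_comm _ _

end PotentUUSC

/-- Corollary 3.2: every potent UUSC ring is left and right quasi-duo: every maximal
left ideal and every maximal right ideal is a two-sided ideal. -/
theorem stmt_10 (R : Type*) [Ring R] (hpot : Potent R) (h : IsUUSC R) :
    (∀ I : Ideal R, I.IsMaximal → ∀ x ∈ I, ∀ r : R, x * r ∈ I) ∧
    (∀ I : Submodule Rᵐᵒᵖ R, IsCoatom I → ∀ x ∈ I, ∀ r : R, r * x ∈ I) := by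
  refine ⟨fun I hI x hx r => ?_, fun I hI x hx r => ?_⟩
  · have hJ : x * r - r * x ∈ I :=
      Ring.jacobson_le_of_isMaximal I (mul_sub_mul_mem_jacobson hpot h x r)
    simpa using I.add_mem hJ (I.mul_mem_left r hx)
  · have hJ : x * r - r * x ∈ I :=
      mem_of_isCoatom_of_mem_jacobson hI (mul_sub_mul_mem_jacobson hpot h x r)
    simpa using I.sub_mem (I.smul_mem (MulOpposite.op r) hx) hJ
end

section
/- Let R be a von Neumann regular ring. Then R is UUSC if and only if R is Boolean. -/
/-! Uniqueness of the decomposition `u = u + 0` of a unit `u` rules out every nonzero idempotent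
`g` commuting with `u` for which `u - g` is again a unit.  A square-zero element with a square-zero
reflexive inverse generates a copy of the `2 × 2` matrices, whose Fibonacci matrix gives such a
unit; as such inverses exist in a regular ring, a regular UUSC ring is reduced.  Its idempotents
are then central, so `a + 1 - ax` is a unit whenever `axa = a`.  For `a = u - 1` this forces every
unit to be `1`, and then for arbitrary `a` it gives `a = ax`, an idempotent. -/

section

variable {R : Type*} [Ring R]

theorem IsIdempotentElem.commute_of_isReduced [IsReduced R] {e : R} (he : IsIdempotentElem e)
    (r : R) : Commute e r := by
  have hsq : ∀ n : R, n * n = 0 → n = 0 := fun n hn =>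
    (isReduced_iff_pow_one_lt 2 one_lt_two).mp inferInstance n (by rwa [sq])
  have hee : ∀ t, e * (e * t) = e * t := fun t => by rw [← mul_assoc, he.eq]
  have hleft : e * r * (1 - e) = 0 := hsq _ <| by
    simp only [mul_sub, sub_mul, mul_one, mul_assoc, hee]; abel
  have hright : (1 - e) * r * e = 0 := hsq _ <| by
    simp only [mul_sub, sub_mul, one_mul, mul_assoc, hee]; abel
  simp only [mul_sub, sub_mul, mul_one, one_mul, sub_eq_zero] at hleft hright
  exact hleft.trans hright.symm

theorem exists_reflexive_inverse_of_mul_self_eq_zero {n x : R} (hnn : n * n = 0)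
    (hx : n * x * n = n) : ∃ z, z * z = 0 ∧ n * z * n = n ∧ z * n * z = z := by
  have hnn' : ∀ t, n * (n * t) = 0 := fun t => by rw [← mul_assoc, hnn, zero_mul]
  have hx₀ : n * (x * n) = n := by rw [← mul_assoc, hx]
  have hx' : ∀ t, n * (x * (n * t)) = n * t := fun t => by rw [← mul_assoc, ← mul_assoc, hx]
  -- `x * n * x` is a reflexive inverse; the factor `1 - n * x` on the left makes it square-zero.
  refine ⟨x * n * x - n * x * (x * n * x), ?_, ?_, ?_⟩ <;>
    simp only [mul_sub, sub_mul, mul_assoc, hnn', hx₀, hx', mul_zero, zero_mul] <;> abel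

theorem isUnit_add_one_sub_mul [IsReduced R] {a x : R} (hx : a * x * a = a) :
    IsUnit (a + 1 - a * x) := by
  suffices key : ∀ y, a * y * a = a → y * a * y = y → IsUnit (a + 1 - a * y) by
    have hx₀ : a * (x * a) = a := by rw [← mul_assoc, hx]
    have hx' : ∀ t, a * (x * (a * t)) = a * t := fun t => by rw [← mul_assoc, ← mul_assoc, hx]
    have hax : a * (x * a * x) = a * x := by simp only [mul_assoc, hx']
    rw [← hax]
    exact key _ (by simp only [mul_assoc, hx₀, hx']) (by simp only [mul_assoc, hx₀, hx'])
  intro y ha hy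
  have he : IsIdempotentElem (a * y) := by rw [IsIdempotentElem, ← mul_assoc, ha]
  have hf : IsIdempotentElem (y * a) := by rw [IsIdempotentElem, ← mul_assoc, hy]
  have hay : a * (a * y) = a := by rw [← (he.commute_of_isReduced a).eq, ha]
  have hyy : a * (y * y) = y := by
    rw [← mul_assoc, (he.commute_of_isReduced y).eq, ← mul_assoc, hy]
  have hya : y * a = a * y := by
    have hfa : y * a * a = a := by rw [(hf.commute_of_isReduced a).eq, ← mul_assoc, ha]
    calc y * a = a * y * y * a := by rw [(he.commute_of_isReduced y).eq, ← mul_assoc, hy]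
      _ = a * y * (y * a) := by simp only [mul_assoc]
      _ = y * a * (a * y) := (he.commute_of_isReduced _).eq
      _ = a * y := by rw [← mul_assoc, hfa]
  have hyay : y * (a * y) = y := by rw [← mul_assoc, hy]
  refine ⟨⟨a + 1 - a * y, y + 1 - a * y, ?_, ?_⟩, rfl⟩
  · simp only [mul_sub, sub_mul, add_mul, mul_add, mul_one, one_mul, he.eq, hay, hyy, mul_assoc]
    abel
  · simp only [mul_sub, sub_mul, add_mul, mul_add, mul_one, one_mul, he.eq, hya, hay, hyay,
      mul_assoc]
    abel

namespace IsUUSC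

theorem eq_zero_of_isUnit_sub_s11 (hR : IsUUSC R) {u g : R} (hu : IsUnit u)
    (hg : IsIdempotentElem g) (hc : Commute u g) (hug : IsUnit (u - g)) : g = 0 := by
  obtain ⟨e, -, huniq⟩ := hR u hu
  exact (huniq g ⟨hg, hug, hc⟩).trans (huniq 0 ⟨.zero, by rwa [sub_zero], by simp⟩).symm

theorem eq_zero_of_mul_sub_eq_one (hR : IsUUSC R) {u g : R} (hg : IsIdempotentElem g)
    (h₁ : u * (u - g) = 1) (h₂ : (u - g) * u = 1) : g = 0 :=
  hR.eq_zero_of_isUnit_sub_s11 ⟨⟨u, u - g, h₁, h₂⟩, rfl⟩ hg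
    (show u * g = g * u from sub_right_inj.mp <| by rw [← mul_sub, ← sub_mul, h₁, h₂])
    ⟨⟨u - g, u, h₂, h₁⟩, rfl⟩

/-- `n`, `z`, `nz`, `zn` are matrix units of a copy of `2 × 2` matrices with identity
`g = nz + zn`; `u` is `1 - g` plus the Fibonacci matrix `nz + n + z`, whose inverse is
its difference with `g`. -/
theorem eq_zero_of_reflexive_inverse (hR : IsUUSC R) {n z : R} (hnn : n * n = 0)
    (hzz : z * z = 0) (hnzn : n * z * n = n) (hznz : z * n * z = z) : n = 0 := by
  have hnn' : ∀ t, n * (n * t) = 0 := fun t => by rw [← mul_assoc, hnn, zero_mul]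
  have hzz' : ∀ t, z * (z * t) = 0 := fun t => by rw [← mul_assoc, hzz, zero_mul]
  have hnzn₀ : n * (z * n) = n := by rw [← mul_assoc, hnzn]
  have hznz₀ : z * (n * z) = z := by rw [← mul_assoc, hznz]
  have hnzn' : ∀ t, n * (z * (n * t)) = n * t := fun t => by
    rw [← mul_assoc, ← mul_assoc, hnzn]
  have hznz' : ∀ t, z * (n * (z * t)) = z * t := fun t => by
    rw [← mul_assoc, ← mul_assoc, hznz]
  have hg : IsIdempotentElem (n * z + z * n) := by
    simp only [IsIdempotentElem, add_mul, mul_add, mul_assoc, hnzn', hznz', hnn', hzz',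
      mul_zero, add_zero, zero_add]
  have hg₀ : n * z + z * n = 0 := hR.eq_zero_of_mul_sub_eq_one (u := 1 + n + z - z * n) hg
    (by simp only [mul_sub, sub_mul, add_mul, mul_add, mul_one, one_mul, mul_assoc, hnn, hzz,
      hnzn₀, hznz₀, hnn', hzz', mul_zero]; abel)
    (by simp only [mul_sub, sub_mul, add_mul, mul_add, mul_one, one_mul, mul_assoc, hnn, hzz,
      hnzn₀, hznz₀, hzz', mul_zero]; abel)
  have hnz : n * z = 0 := by
    calc n * z = n * z * (n * z + z * n) := by
          simp only [mul_add, mul_assoc, hnzn', hzz', mul_zero, add_zero]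
      _ = 0 := by rw [hg₀, mul_zero]
  rw [← hnzn, hnz, zero_mul]

theorem isReduced_of_regular (hR : IsUUSC R) (hreg : ∀ a : R, ∃ x, a * x * a = a) :
    IsReduced R :=
  (isReduced_iff_pow_one_lt 2 one_lt_two).mpr fun n hn => by
    rw [sq] at hn
    obtain ⟨x, hx⟩ := hreg n
    obtain ⟨z, hzz, hnzn, hznz⟩ := exists_reflexive_inverse_of_mul_self_eq_zero hn hx
    exact hR.eq_zero_of_reflexive_inverse hn hzz hnzn hznz

theorem eq_one_of_isUnit_of_regular (hR : IsUUSC R) (hreg : ∀ a : R, ∃ x, a * x * a = a)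
    {u : R} (hu : IsUnit u) : u = 1 := by
  have := hR.isReduced_of_regular hreg
  obtain ⟨x, hx⟩ := hreg (u - 1)
  have he : IsIdempotentElem ((u - 1) * x) := by rw [IsIdempotentElem, ← mul_assoc, hx]
  have he₀ : (u - 1) * x = 0 := hR.eq_zero_of_isUnit_sub_s11 hu he (he.commute_of_isReduced u).symm
    (by simpa only [sub_add_cancel] using isUnit_add_one_sub_mul hx)
  rw [← sub_eq_zero, ← hx, he₀, zero_mul]

theorem isIdempotentElem_of_regular (hR : IsUUSC R) (hreg : ∀ a : R, ∃ x, a * x * a = a)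
    (a : R) : IsIdempotentElem a := by
  have := hR.isReduced_of_regular hreg
  obtain ⟨x, hx⟩ := hreg a
  have hunit := hR.eq_one_of_isUnit_of_regular hreg (isUnit_add_one_sub_mul hx)
  rw [add_sub_right_comm, add_eq_right, sub_eq_zero] at hunit
  rw [IsIdempotentElem]
  nth_rw 1 [hunit]
  exact hx

end IsUUSC

theorem isUUSC_of_forall_isIdempotentElem (h : ∀ a : R, IsIdempotentElem a) : IsUUSC R := by
  intro a ha
  have ha₁ : a = 1 := (IsIdempotentElem.iff_eq_one_of_isUnit ha).mp (h a)
  refine ⟨0, ⟨.zero, by rwa [sub_zero], by simp⟩, fun f ⟨_, hf, _⟩ => ?_⟩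
  have hf₁ : a - f = 1 := (IsIdempotentElem.iff_eq_one_of_isUnit hf).mp (h _)
  rwa [ha₁, sub_eq_self] at hf₁

end

/-- Corollary 3.3: a von Neumann regular ring is UUSC iff it is Boolean. -/
theorem stmt_11 (R : Type*) [Ring R] (hreg : ∀ a : R, ∃ x : R, a * x * a = a) :
    IsUUSC R ↔ ∀ a : R, IsIdempotentElem a :=
  ⟨fun hR => hR.isIdempotentElem_of_regular hreg, isUUSC_of_forall_isIdempotentElem⟩
end

section
/- Let R be a ring which is CUSC (respectively, UUSC) and semi-potent. Then 2 ∈ J(R). -/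
/-- A unit of the corner ring `eRe`, extended by `1 - e`, is a unit of `R`. -/
lemma isUnit_one_sub_add_of_corner {R : Type*} [Ring R] {e x y : R} (he : IsIdempotentElem e)
    (hex : e * x = x) (hxe : x * e = x) (hey : e * y = y) (hye : y * e = y)
    (hxy : x * y = e) (hyx : y * x = e) : IsUnit (1 - e + x) := by
  refine ⟨⟨1 - e + x, 1 - e + y, ?_, ?_⟩, rfl⟩
  · calc (1 - e + x) * (1 - e + y) = 1 - e - (e - e * e) + (y - e * y) + (x - x * e) + x * y := by
          noncomm_ring
      _ = 1 := by rw [he.eq, hey, hxe, hxy]; abel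
  · calc (1 - e + y) * (1 - e + x) = 1 - e - (e - e * e) + (x - e * x) + (y - y * e) + y * x := by
          noncomm_ring
      _ = 1 := by rw [he.eq, hex, hye, hyx]; abel

lemma isCleanElem_of_isUnit {R : Type*} [Ring R] {a : R} (ha : IsUnit a) : IsCleanElem a :=
  ⟨0, .zero, by simpa using ha⟩

lemma IsCUSC.isUUSC {R : Type*} [Ring R] (h : IsCUSC R) : IsUUSC R :=
  fun a ha ↦ h a (isCleanElem_of_isUnit ha)

lemma IsUSCleanElem.eq_zero_of_isUnit {R : Type*} [Ring R] {a e : R} (h : IsUSCleanElem a)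
    (ha : IsUnit a) (he : IsIdempotentElem e) (hae : IsUnit (a - e)) (hcomm : a * e = e * a) :
    e = 0 :=
  h.unique ⟨he, hae, hcomm⟩ ⟨.zero, by simpa using ha, by simp⟩

lemma exists_half_of_isIdempotentElem_mem_span_two {R : Type*} [Ring R] {e : R}
    (he : IsIdempotentElem e) (he2 : e ∈ Ideal.span {(2 : R)}) :
    ∃ s, e * s = s ∧ s * e = s ∧ s + s = e := by
  obtain ⟨t, ht⟩ := Ideal.mem_span_singleton'.mp he2
  refine ⟨e * t * e, by rw [← mul_assoc, ← mul_assoc, he.eq], by rw [mul_assoc, he.eq], ?_⟩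
  calc e * t * e + e * t * e = e * (t * 2) * e := by noncomm_ring
    _ = e := by rw [ht, he.eq, he.eq]

lemma IsUUSC.two_mem_jacobsonRad {R : Type*} [Ring R] (hU : IsUUSC R) (hS : Semipotent R) :
    (2 : R) ∈ jacobsonRad R := by
  by_contra h2
  obtain ⟨e, he2, hne, he⟩ := hS.1 (Ideal.span {2}) fun hsub ↦
    h2 (hsub (Ideal.mem_span_singleton_self _))
  obtain ⟨s, hes, hse, hss⟩ := exists_half_of_isIdempotentElem_mem_span_two he he2
  have hunit : IsUnit (1 - e + s) :=
    isUnit_one_sub_add_of_corner he hes hse (by rw [mul_add, he.eq]) (by rw [add_mul, he.eq])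
      (by rw [mul_add, hse, hss]) (by rw [add_mul, hes, hss])
  -- `s - e = -s`, whose inverse in the corner ring is `-2e`
  have hunit_sub : IsUnit (1 - e + s - e) := by
    have : 1 - e + s - e = 1 - e + -s := by rw [← hss]; abel
    rw [this]
    exact isUnit_one_sub_add_of_corner he (by rw [mul_neg, hes]) (by rw [neg_mul, hse])
      (by rw [mul_neg, mul_add, he.eq]) (by rw [neg_mul, add_mul, he.eq])
      (by rw [neg_mul_neg, mul_add, hse, hss]) (by rw [neg_mul_neg, add_mul, hes, hss])
  have hcomm : (1 - e + s) * e = e * (1 - e + s) := by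
    simp only [add_mul, sub_mul, mul_add, mul_sub, one_mul, mul_one, hes, hse]
  exact hne ((hU _ hunit).eq_zero_of_isUnit hunit he hunit_sub hcomm)

/-- Theorem 3.5: if `R` is CUSC (resp. UUSC) and semi-potent, then `2 ∈ J(R)`. -/
theorem stmt_13 (R : Type*) [Ring R] :
    (IsCUSC R ∧ Semipotent R → (2 : R) ∈ jacobsonRad R) ∧
    (IsUUSC R ∧ Semipotent R → (2 : R) ∈ jacobsonRad R) :=
  ⟨fun ⟨hC, hS⟩ ↦ hC.isUUSC.two_mem_jacobsonRad hS,
    fun ⟨hU, hS⟩ ↦ hU.two_mem_jacobsonRad hS⟩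
end
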